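/- Fix an integer N ≥ 2 and positive reals σ_1, …, σ_N. Let A be the (N−1)×(N−1) symmetric tridiagonal matrix with A_{ii} = σ_i² + σ_{i+1}², A_{i,i+1} = A_{i+1,i} = −σ_{i+1}², and A_{ij} = 0 for |i−j| ≥ 2, and let ρ be the (N−1)×(N−1) matrix with ρ_{ij} = 2·min(i,j)·(N − max(i,j))/N. Then for all 1 ≤ k ≤ l ≤ N−1: (ρAρ)_{kl} = (4(N−k)(N−l)/N²)·Σ_{p=1}^{k} σ_p² − (4k(N−l)/N²)·Σ_{p=k+1}^{l} σ_p² + (4kl/N²)·Σ_{p=l+1}^{N} σ_p². -/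
import Mathlib

lemma sum_fin_ite (M : ℕ) (f : Fin M → ℝ) (a : ℕ) :
    ∑ p : Fin M, (if p.1 = a then f p else 0) = if h : a < M then f ⟨a, h⟩ else 0 := by
  split_ifs with h
  · rw [Finset.sum_eq_single (⟨a, h⟩ : Fin M)]
    · simp
    · intro b _ hb
      rw [if_neg]
      simpa [Fin.ext_iff] using hb
    · simp
  · apply Finset.sum_eq_zero
    intro p _
    rw [if_neg]
    have := p.isLt
    omega

/-- Explicit formula for the entries of `ρAρ`, where `A` is the covariance matrix of the
gap process and `ρ = R⁻¹` the inverse reflection matrix: for `1 ≤ k ≤ l ≤ N-1`,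
`(ρAρ)_{kl} = (4(N−k)(N−l)/N²) ∑_{p≤k} σ_p² − (4k(N−l)/N²) ∑_{k<p≤l} σ_p²
            + (4kl/N²) ∑_{p>l} σ_p²`. -/
theorem rhoArho_entry_formula (N : ℕ) (hN : 2 ≤ N) (σ : Fin N → ℝ) (hσ : ∀ i, 0 < σ i) :
    let A : Matrix (Fin (N - 1)) (Fin (N - 1)) ℝ := fun i j =>
      if i = j then
        σ ⟨i.1, by have := i.isLt; omega⟩ ^ 2 + σ ⟨i.1 + 1, by have := i.isLt; omega⟩ ^ 2
      else if i.1 + 1 = j.1 ∨ j.1 + 1 = i.1 then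
        -σ ⟨max i.1 j.1, by have := i.isLt; have := j.isLt; omega⟩ ^ 2
      else 0
    let ρ : Matrix (Fin (N - 1)) (Fin (N - 1)) ℝ := fun i j =>
      2 * (min (i.1 + 1) (j.1 + 1) : ℕ) * ((N : ℝ) - (max (i.1 + 1) (j.1 + 1) : ℕ)) / N
    ∀ k l : Fin (N - 1), k ≤ l →
      (ρ * A * ρ) k l =
        4 * ((N : ℝ) - ((k.1 : ℝ) + 1)) * ((N : ℝ) - ((l.1 : ℝ) + 1)) / (N : ℝ) ^ 2 *
            (∑ p ∈ Finset.univ.filter fun p : Fin N => p.1 ≤ k.1, σ p ^ 2)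
          - 4 * ((k.1 : ℝ) + 1) * ((N : ℝ) - ((l.1 : ℝ) + 1)) / (N : ℝ) ^ 2 *
            (∑ p ∈ Finset.univ.filter fun p : Fin N => k.1 < p.1 ∧ p.1 ≤ l.1, σ p ^ 2)
          + 4 * ((k.1 : ℝ) + 1) * ((l.1 : ℝ) + 1) / (N : ℝ) ^ 2 *
            (∑ p ∈ Finset.univ.filter fun p : Fin N => l.1 < p.1, σ p ^ 2) := by
  intro A ρ k l hkl
  have hN0 : (N : ℝ) ≠ 0 := Nat.cast_ne_zero.mpr (by omega)
  have hk := k.isLt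
  have hl := l.isLt
  have hkl1 : k.1 ≤ l.1 := hkl
  set m : Fin (N - 1) → Fin N → ℝ := fun i p =>
    (if p.1 = i.1 then (1 : ℝ) else 0) - (if p.1 = i.1 + 1 then 1 else 0) with hm
  set f : Fin (N - 1) → Fin N → ℝ := fun q p =>
    if p.1 ≤ q.1 then 2 * ((N : ℝ) - ((q.1 : ℝ) + 1)) / N
    else -(2 * ((q.1 : ℝ) + 1) / N) with hfdef
  set τ : ℕ → ℝ := fun a => if h : a < N then σ ⟨a, h⟩ ^ 2 else 0 with hτdef
  have hτ : ∀ (a : ℕ) (h : a < N), σ ⟨a, h⟩ ^ 2 = τ a := by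
    intro a h
    simp only [hτdef, dif_pos h]
  have hρsym : ∀ i j, ρ i j = ρ j i := by
    intro i j
    simp only [ρ]
    rw [min_comm (i.1 + 1), max_comm (i.1 + 1)]
  -- Step 1 : A = m diag(σ²) mᵀ
  have hA : ∀ i j, A i j = ∑ p : Fin N, σ p ^ 2 * (m i p * m j p) := by
    intro i j
    have hi := i.isLt
    have hj := j.isLt
    have step : ∀ p : Fin N, σ p ^ 2 * (m i p * m j p)
        = (if p.1 = i.1 then σ p ^ 2 * m j p else 0)
          - (if p.1 = i.1 + 1 then σ p ^ 2 * m j p else 0) := by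
      intro p
      simp only [hm]
      split_ifs <;> first | ring1 | (exfalso; omega)
    rw [Finset.sum_congr rfl (fun p _ => step p), Finset.sum_sub_distrib,
        sum_fin_ite N (fun p => σ p ^ 2 * m j p) i.1,
        sum_fin_ite N (fun p => σ p ^ 2 * m j p) (i.1 + 1),
        dif_pos (show i.1 < N by omega), dif_pos (show i.1 + 1 < N by omega)]
    simp only [A, hm, Fin.ext_iff]
    simp only [hτ]
    split_ifs <;>
      first
        | ring1
        | (exfalso; omega)
        | (rw [show max i.1 j.1 = i.1 + 1 from by omega]; ring1)
        | (rw [show max i.1 j.1 = i.1 from by omega]; ring1)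
  -- Step 2 : ρ · m = f
  have hrm : ∀ (q : Fin (N - 1)) (p : Fin N),
      (∑ i : Fin (N - 1), ρ q i * m i p) = f q p := by
    intro q p
    have hq := q.isLt
    have hp := p.isLt
    have step : ∀ i : Fin (N - 1), ρ q i * m i p
        = (if i.1 = p.1 then ρ q i else 0) - (if i.1 + 1 = p.1 then ρ q i else 0) := by
      intro i
      simp only [hm]
      split_ifs <;> first | ring1 | (exfalso; omega)
    rw [Finset.sum_congr rfl (fun i _ => step i), Finset.sum_sub_distrib]
    by_cases hp0 : p.1 = 0
    · have h2 : (∑ i : Fin (N - 1), if i.1 + 1 = p.1 then ρ q i else 0) = 0 := by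
        apply Finset.sum_eq_zero
        intro i _
        rw [if_neg]
        omega
      rw [h2, sum_fin_ite (N - 1) (fun i => ρ q i) p.1,
          dif_pos (show p.1 < N - 1 by omega)]
      simp only [ρ, hfdef]
      rw [hp0]
      rw [min_eq_right (by omega), max_eq_left (by omega), if_pos (by omega)]
      push_cast
      ring
    · have h2form : ∀ i : Fin (N - 1), (if i.1 + 1 = p.1 then ρ q i else 0)
          = (if i.1 = p.1 - 1 then ρ q i else 0) := by
        intro i
        exact if_congr (by omega) rfl rfl
      rw [Finset.sum_congr rfl (fun i _ => h2form i),
          sum_fin_ite (N - 1) (fun i => ρ q i) p.1,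
          sum_fin_ite (N - 1) (fun i => ρ q i) (p.1 - 1),
          dif_pos (show p.1 - 1 < N - 1 by omega)]
      by_cases hpn : p.1 < N - 1
      · rw [dif_pos hpn]
        simp only [ρ, hfdef]
        rw [show p.1 - 1 + 1 = p.1 from by omega]
        by_cases hle : p.1 ≤ q.1
        · rw [if_pos hle, min_eq_right (by omega), max_eq_left (by omega),
              min_eq_right (by omega), max_eq_left (by omega)]
          push_cast
          field_simp
          ring
        · rw [if_neg hle, min_eq_left (by omega), max_eq_right (by omega),
              min_eq_left (by omega), max_eq_right (by omega)]
          push_cast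
          field_simp
          ring
      · rw [dif_neg hpn]
        simp only [ρ, hfdef]
        rw [show p.1 - 1 + 1 = p.1 from by omega, if_neg (by omega),
            min_eq_left (by omega), max_eq_right (by omega)]
        rw [show p.1 = N - 1 from by omega]
        rw [show ((N - 1 : ℕ) : ℝ) = (N : ℝ) - 1 from by
          push_cast [Nat.cast_sub (by omega : 1 ≤ N)]; ring]
        push_cast
        field_simp
        try ring
  -- Step 3 : the entry as a single sum over p
  have hentry : (ρ * A * ρ) k l = ∑ p : Fin N, σ p ^ 2 * (f k p * f l p) := by
    have expand : ∀ x j : Fin (N - 1), ρ k j * A j x * ρ x l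
        = ∑ p : Fin N, (ρ k j * m j p) * (σ p ^ 2 * (m x p * ρ x l)) := by
      intro x j
      rw [hA j x, Finset.mul_sum, Finset.sum_mul]
      exact Finset.sum_congr rfl fun p _ => by ring
    simp only [Matrix.mul_apply, Finset.sum_mul]
    rw [Finset.sum_congr rfl fun x _ => Finset.sum_congr rfl fun j _ => expand x j]
    rw [Finset.sum_congr rfl fun x _ => Finset.sum_comm, Finset.sum_comm]
    apply Finset.sum_congr rfl
    intro p _
    have h1 : ∀ x : Fin (N - 1),
        (∑ j : Fin (N - 1), (ρ k j * m j p) * (σ p ^ 2 * (m x p * ρ x l)))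
          = f k p * (σ p ^ 2 * (m x p * ρ x l)) := by
      intro x
      rw [← Finset.sum_mul, hrm k p]
    rw [Finset.sum_congr rfl fun x _ => h1 x]
    have h2 : (∑ x : Fin (N - 1), m x p * ρ x l) = f l p := by
      rw [← hrm l p]
      exact Finset.sum_congr rfl fun x _ => by rw [hρsym]; ring
    rw [← Finset.mul_sum, ← Finset.mul_sum, h2]
    ring
  rw [hentry]
  -- Step 4 : split the sum into the three ranges
  have hsplit : (∑ p : Fin N, σ p ^ 2 * (f k p * f l p))
      = (∑ p ∈ Finset.univ.filter fun p : Fin N => p.1 ≤ k.1, σ p ^ 2 * (f k p * f l p))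
        + (∑ p ∈ Finset.univ.filter fun p : Fin N => k.1 < p.1 ∧ p.1 ≤ l.1,
            σ p ^ 2 * (f k p * f l p))
        + (∑ p ∈ Finset.univ.filter fun p : Fin N => l.1 < p.1,
            σ p ^ 2 * (f k p * f l p)) := by
    rw [← Finset.sum_filter_add_sum_filter_not Finset.univ (fun p : Fin N => p.1 ≤ k.1),
        add_assoc]
    congr 1
    rw [← Finset.sum_filter_add_sum_filter_not
          (Finset.univ.filter fun p : Fin N => ¬p.1 ≤ k.1) (fun p : Fin N => p.1 ≤ l.1),
        Finset.filter_filter, Finset.filter_filter]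
    congr 1
    · apply Finset.sum_congr _ fun _ _ => rfl
      exact Finset.filter_congr fun p _ => by omega
    · apply Finset.sum_congr _ fun _ _ => rfl
      exact Finset.filter_congr fun p _ => by omega
  rw [hsplit]
  have e1 : (∑ p ∈ Finset.univ.filter fun p : Fin N => p.1 ≤ k.1, σ p ^ 2 * (f k p * f l p))
      = 4 * ((N : ℝ) - ((k.1 : ℝ) + 1)) * ((N : ℝ) - ((l.1 : ℝ) + 1)) / (N : ℝ) ^ 2 *
          (∑ p ∈ Finset.univ.filter fun p : Fin N => p.1 ≤ k.1, σ p ^ 2) := by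
    rw [Finset.mul_sum]
    apply Finset.sum_congr rfl
    intro p hp
    simp only [Finset.mem_filter] at hp
    simp only [hfdef]
    rw [if_pos hp.2, if_pos (by omega : p.1 ≤ l.1)]
    field_simp
    ring
  have e2 : (∑ p ∈ Finset.univ.filter fun p : Fin N => k.1 < p.1 ∧ p.1 ≤ l.1,
        σ p ^ 2 * (f k p * f l p))
      = (-(4 * ((k.1 : ℝ) + 1) * ((N : ℝ) - ((l.1 : ℝ) + 1)) / (N : ℝ) ^ 2)) *
          (∑ p ∈ Finset.univ.filter fun p : Fin N => k.1 < p.1 ∧ p.1 ≤ l.1, σ p ^ 2) := by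
    rw [Finset.mul_sum]
    apply Finset.sum_congr rfl
    intro p hp
    simp only [Finset.mem_filter] at hp
    simp only [hfdef]
    rw [if_neg (by omega : ¬p.1 ≤ k.1), if_pos hp.2.2]
    field_simp
    ring
  have e3 : (∑ p ∈ Finset.univ.filter fun p : Fin N => l.1 < p.1,
        σ p ^ 2 * (f k p * f l p))
      = 4 * ((k.1 : ℝ) + 1) * ((l.1 : ℝ) + 1) / (N : ℝ) ^ 2 *
          (∑ p ∈ Finset.univ.filter fun p : Fin N => l.1 < p.1, σ p ^ 2) := by
    rw [Finset.mul_sum]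
    apply Finset.sum_congr rfl
    intro p hp
    simp only [Finset.mem_filter] at hp
    simp only [hfdef]
    rw [if_neg (by omega : ¬p.1 ≤ k.1), if_neg (by omega : ¬p.1 ≤ l.1)]
    field_simp
    ring
  rw [e1, e2, e3]
  ring
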